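/- Let S be a finite set with |S| = κ ≥ 2, α > 1, and let m_⋆ : S → (0,1] with m_⋆(y) ≤ 1 for all y. Fix x ∈ S. There exists a finite constant C_κ depending only on κ and α such that for all integers ℓ and N with N > ℓ ≥ 0, N^α Σ_{η ∈ E_N : η_x ≥ N - ℓ} m_⋆^η / a(η) ≤ C_κ · m_⋆(x)^{N-ℓ}, where m_⋆^η = Π_{z∈S} m_⋆(z)^{η_z}. -/

import Mathlib

noncomputable def aZR (α : ℝ) (n : ℕ) : ℝ := if n = 0 then 1 else (n : ℝ) ^ α

def confs (S : Type*) [Fintype S] [DecidableEq S] (N : ℕ) : Finset (S → ℕ) :=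
  (Fintype.piFinset fun _ => Finset.range (N + 1)).filter (fun η => ∑ x, η x = N)

/-!
Write `m⋆^η / a(η) = m⋆^η · ∏_z a(η_z)⁻¹`. Since `m⋆ ≤ 1`, on `{η_x ≥ N - ℓ}` the factor `m⋆^η`
is at most `m⋆(x)^(N-ℓ)`, so it suffices to bound `N^α ∑_{η ∈ E_N} ∏_z a(η_z)⁻¹` uniformly in `N`. Every
`η ∈ E_N` has a site `y` with `η_y ≥ N/κ`, where `N^α / a(η_y) ≤ κ^α`; the remaining factors
`∏_{z ≠ y} a(η_z)⁻¹` sum over `E_N` to at most `K^(κ-1)`, with `K = ∑_n a(n)⁻¹ < ∞` as `α > 1`.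
-/

open Finset

lemma aZR_pos (α : ℝ) (n : ℕ) : 0 < aZR α n := by
  unfold aZR
  split_ifs with h
  · exact one_pos
  · exact Real.rpow_pos_of_pos (by exact_mod_cast Nat.pos_of_ne_zero h) α

lemma summable_inv_aZR {α : ℝ} (hα : 1 < α) : Summable fun n => (aZR α n)⁻¹ := by
  refine (summable_nat_add_iff 1).mp ?_
  simpa [aZR] using
    (summable_nat_add_iff 1).mpr (Real.summable_nat_rpow_inv.mpr hα)

lemma one_le_tsum_inv_aZR {α : ℝ} (hα : 1 < α) : 1 ≤ ∑' n, (aZR α n)⁻¹ := by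
  simpa [aZR] using
    (summable_inv_aZR hα).le_tsum 0 fun n _ => (inv_pos.mpr (aZR_pos α n)).le

lemma rpow_le_rpow_mul_aZR {α c : ℝ} (hα : 0 ≤ α) (hc : 1 ≤ c) {N n : ℕ}
    (h : (N : ℝ) ≤ c * n) : (N : ℝ) ^ α ≤ c ^ α * aZR α n := by
  rcases eq_or_ne n 0 with rfl | hn
  · have hN : (N : ℝ) = 0 := by simpa using h
    simpa [aZR, hN] using (Real.zero_rpow_le_one α).trans (Real.one_le_rpow hc hα)
  · rw [aZR, if_neg hn, ← Real.mul_rpow (by linarith) (Nat.cast_nonneg n)]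
    exact Real.rpow_le_rpow (Nat.cast_nonneg N) h hα

section Confs

variable {S : Type*} [Fintype S] [DecidableEq S] {N : ℕ}

lemma exists_le_card_mul_of_mem_confs [Nonempty S] {η : S → ℕ} (hη : η ∈ confs S N) :
    ∃ y, N ≤ Fintype.card S * η y := by
  have hsum : ∑ _z : S, N ≤ ∑ z, Fintype.card S * η z := by
    rw [← mul_sum, (mem_filter.mp hη).2, sum_const, card_univ, smul_eq_mul]
  obtain ⟨y, -, hy⟩ := exists_le_of_sum_le univ_nonempty hsum
  exact ⟨y, hy⟩

/-- A site with `η_y ≥ N/κ` absorbs the factor `N^α`, since then `N^α / a(η_y) ≤ κ^α`. -/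
lemma rpow_mul_prod_inv_aZR_le [Nonempty S] {α : ℝ} (hα : 0 ≤ α) {η : S → ℕ}
    (hη : η ∈ confs S N) :
    (N : ℝ) ^ α * ∏ z, (aZR α (η z))⁻¹ ≤
      (Fintype.card S : ℝ) ^ α * ∑ y, ∏ z ∈ univ.erase y, (aZR α (η z))⁻¹ := by
  obtain ⟨y, hy⟩ := exists_le_card_mul_of_mem_confs hη
  have hκ : (1 : ℝ) ≤ Fintype.card S := by exact_mod_cast Fintype.card_pos
  have hrest_nonneg : ∀ y', 0 ≤ ∏ z ∈ univ.erase y', (aZR α (η z))⁻¹ :=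
    fun y' => prod_nonneg fun z _ => (inv_pos.mpr (aZR_pos α (η z))).le
  have hNy : (N : ℝ) ^ α * (aZR α (η y))⁻¹ ≤ (Fintype.card S : ℝ) ^ α := by
    rw [mul_inv_le_iff₀ (aZR_pos α (η y))]
    exact rpow_le_rpow_mul_aZR hα hκ (by exact_mod_cast hy)
  calc (N : ℝ) ^ α * ∏ z, (aZR α (η z))⁻¹
      = (N : ℝ) ^ α * (aZR α (η y))⁻¹ * ∏ z ∈ univ.erase y, (aZR α (η z))⁻¹ := by
        rw [← mul_prod_erase univ _ (mem_univ y), mul_assoc]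
    _ ≤ (Fintype.card S : ℝ) ^ α * ∏ z ∈ univ.erase y, (aZR α (η z))⁻¹ :=
        mul_le_mul_of_nonneg_right hNy (hrest_nonneg y)
    _ ≤ (Fintype.card S : ℝ) ^ α * ∑ y', ∏ z ∈ univ.erase y', (aZR α (η z))⁻¹ :=
        mul_le_mul_of_nonneg_left
          (single_le_sum (fun y' _ => hrest_nonneg y') (mem_univ y))
          (Real.rpow_nonneg (Nat.cast_nonneg _) α)

lemma injOn_update_confs (y : S) :
    Set.InjOn (fun η : S → ℕ => Function.update η y 0) (confs S N) := by
  intro η₁ h₁ η₂ h₂ heq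
  have hoff : ∀ z, z ≠ y → η₁ z = η₂ z := fun z hz => by
    simpa [Function.update_of_ne hz] using congrFun heq z
  have hsplit : ∀ η ∈ confs S N, η y + ∑ z ∈ univ.erase y, η z = N := fun η hη => by
    rw [add_sum_erase _ _ (mem_univ y), (mem_filter.mp hη).2]
  have hrest : ∑ z ∈ univ.erase y, η₁ z = ∑ z ∈ univ.erase y, η₂ z :=
    sum_congr rfl fun z hz => hoff z (ne_of_mem_erase hz)
  funext z
  by_cases hz : z = y
  · subst hz
    have := hsplit η₁ h₁
    have := hsplit η₂ h₂
    omega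
  · exact hoff z hz

lemma sum_piFinset_prod_erase (y : S) (s : Finset ℕ) (w : ℕ → ℝ) :
    ∑ ξ ∈ Fintype.piFinset (fun z => if z = y then {0} else s), ∏ z ∈ univ.erase y, w (ξ z) =
      (∑ n ∈ s, w n) ^ (Fintype.card S - 1) := by
  have hprod : ∀ ξ : S → ℕ,
      ∏ z ∈ univ.erase y, w (ξ z) = ∏ z, if z = y then 1 else w (ξ z) := fun ξ => by
    rw [← mul_prod_erase univ _ (mem_univ y), if_pos rfl, one_mul]
    exact prod_congr rfl fun z hz => (if_neg (ne_of_mem_erase hz)).symm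
  simp_rw [hprod]
  rw [← prod_univ_sum (fun z => if z = y then {0} else s)
    (fun z n => if z = y then 1 else w n), ← mul_prod_erase univ _ (mem_univ y)]
  simp only [if_true, sum_singleton, one_mul]
  rw [prod_congr rfl fun z hz => by rw [if_neg (ne_of_mem_erase hz), sum_congr rfl
      fun n _ => if_neg (ne_of_mem_erase hz)], prod_const, card_erase_of_mem (mem_univ y),
    card_univ]

/-- Forgetting `η_y`, which is determined by the other coordinates, embeds `E_N` into a box. -/
lemma sum_confs_prod_erase_le {w : ℕ → ℝ} (hw : ∀ n, 0 ≤ w n) (y : S) :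
    ∑ η ∈ confs S N, ∏ z ∈ univ.erase y, w (η z) ≤
      (∑ n ∈ range (N + 1), w n) ^ (Fintype.card S - 1) := by
  set box := Fintype.piFinset fun z : S => if z = y then {0} else range (N + 1)
  have himage : (confs S N).image (fun η => Function.update η y 0) ⊆ box := by
    simp only [subset_iff, mem_image, forall_exists_index, and_imp, forall_apply_eq_imp_iff₂]
    intro η hη
    rw [Fintype.mem_piFinset]
    intro z
    by_cases hz : z = y
    · simp [hz]
    · simpa [hz] using Fintype.mem_piFinset.mp (mem_filter.mp hη).1 z
  calc ∑ η ∈ confs S N, ∏ z ∈ univ.erase y, w (η z)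
      = ∑ ξ ∈ (confs S N).image (fun η => Function.update η y 0),
          ∏ z ∈ univ.erase y, w (ξ z) := by
        rw [sum_image (injOn_update_confs y)]
        exact sum_congr rfl fun η _ => prod_congr rfl fun z hz => by
          rw [Function.update_of_ne (ne_of_mem_erase hz)]
    _ ≤ ∑ ξ ∈ box, ∏ z ∈ univ.erase y, w (ξ z) :=
        sum_le_sum_of_subset_of_nonneg himage fun ξ _ _ => prod_nonneg fun z _ => hw _
    _ = _ := sum_piFinset_prod_erase y _ w

lemma rpow_mul_sum_confs_prod_inv_aZR_le [Nonempty S] {α : ℝ} (hα : 1 < α) (N : ℕ) :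
    (N : ℝ) ^ α * ∑ η ∈ confs S N, ∏ z, (aZR α (η z))⁻¹ ≤
      (Fintype.card S : ℝ) ^ α * Fintype.card S *
        (∑' n, (aZR α n)⁻¹) ^ (Fintype.card S - 1) := by
  have hw : ∀ n, 0 ≤ (aZR α n)⁻¹ := fun n => (inv_pos.mpr (aZR_pos α n)).le
  have hrange : ∑ n ∈ range (N + 1), (aZR α n)⁻¹ ≤ ∑' n, (aZR α n)⁻¹ :=
    (summable_inv_aZR hα).sum_le_tsum _ fun n _ => hw n
  calc (N : ℝ) ^ α * ∑ η ∈ confs S N, ∏ z, (aZR α (η z))⁻¹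
      ≤ ∑ η ∈ confs S N, (Fintype.card S : ℝ) ^ α *
          ∑ y, ∏ z ∈ univ.erase y, (aZR α (η z))⁻¹ := by
        rw [mul_sum]
        exact sum_le_sum fun η hη => rpow_mul_prod_inv_aZR_le (by linarith) hη
    _ = (Fintype.card S : ℝ) ^ α *
          ∑ y : S, ∑ η ∈ confs S N, ∏ z ∈ univ.erase y, (aZR α (η z))⁻¹ := by
        rw [← mul_sum, sum_comm]
    _ ≤ (Fintype.card S : ℝ) ^ α *
          ∑ _y : S, (∑' n, (aZR α n)⁻¹) ^ (Fintype.card S - 1) := by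
        gcongr with y
        exact (sum_confs_prod_erase_le hw y).trans
          (pow_le_pow_left₀ (sum_nonneg fun n _ => hw n) hrange _)
    _ = _ := by rw [sum_const, card_univ, nsmul_eq_mul, mul_assoc]

lemma prod_pow_le_pow_of_le {m : S → ℝ}
    (hm₀ : ∀ z, 0 ≤ m z) (hm₁ : ∀ z, m z ≤ 1) {η : S → ℕ} {x : S} {k : ℕ} (hk : k ≤ η x) :
    ∏ z, m z ^ η z ≤ m x ^ k := by
  rw [← mul_prod_erase univ _ (mem_univ x)]
  calc m x ^ η x * ∏ z ∈ univ.erase x, m z ^ η z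
      ≤ m x ^ η x * 1 :=
        mul_le_mul_of_nonneg_left
          (prod_le_one (fun z _ => pow_nonneg (hm₀ z) _) fun z _ => pow_le_one₀ (hm₀ z) (hm₁ z))
          (pow_nonneg (hm₀ x) _)
    _ ≤ m x ^ k := by rw [mul_one]; exact pow_le_pow_of_le_one (hm₀ x) (hm₁ x) hk

lemma sum_filter_prod_pow_div_aZR_le {m : S → ℝ}
    (hm₀ : ∀ z, 0 ≤ m z) (hm₁ : ∀ z, m z ≤ 1) (α : ℝ) (x : S) (N k : ℕ) :
    ∑ η ∈ (confs S N).filter (fun η => k ≤ η x), ∏ z, m z ^ η z / aZR α (η z) ≤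
      m x ^ k * ∑ η ∈ confs S N, ∏ z, (aZR α (η z))⁻¹ := by
  have hg : ∀ η : S → ℕ, 0 ≤ ∏ z, (aZR α (η z))⁻¹ :=
    fun η => prod_nonneg fun z _ => (inv_pos.mpr (aZR_pos α (η z))).le
  rw [mul_sum]
  calc ∑ η ∈ (confs S N).filter (fun η => k ≤ η x), ∏ z, m z ^ η z / aZR α (η z)
      ≤ ∑ η ∈ (confs S N).filter (fun η => k ≤ η x), m x ^ k * ∏ z, (aZR α (η z))⁻¹ :=
        sum_le_sum fun η hη => by
          simp_rw [div_eq_mul_inv, prod_mul_distrib]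
          exact mul_le_mul_of_nonneg_right
            (prod_pow_le_pow_of_le hm₀ hm₁ (mem_filter.mp hη).2) (hg η)
    _ ≤ ∑ η ∈ confs S N, m x ^ k * ∏ z, (aZR α (η z))⁻¹ :=
        sum_le_sum_of_subset_of_nonneg (filter_subset _ _)
          fun η _ _ => mul_nonneg (pow_nonneg (hm₀ x) _) (hg η)

end Confs

theorem exponential_decay_condensate_bound_general (S : Type*) [Fintype S] [DecidableEq S]
    (α : ℝ) (hα : 1 < α)
    (mstar : S → ℝ) (hm : ∀ y, 0 < mstar y ∧ mstar y ≤ 1) (x : S) :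
    ∃ C : ℝ, 0 < C ∧ ∀ ℓ N : ℕ, ℓ < N →
      (N : ℝ) ^ α *
        ∑ η ∈ (confs S N).filter (fun η => N - ℓ ≤ η x),
          ∏ z, mstar z ^ η z / aZR α (η z) ≤ C * mstar x ^ (N - ℓ) := by
  have : Nonempty S := ⟨x⟩
  have hK := one_le_tsum_inv_aZR hα
  refine ⟨(Fintype.card S : ℝ) ^ α * Fintype.card S *
      (∑' n, (aZR α n)⁻¹) ^ (Fintype.card S - 1), by positivity, fun ℓ N _ => ?_⟩
  have hmx : 0 ≤ mstar x ^ (N - ℓ) := pow_nonneg (hm x).1.le _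
  calc (N : ℝ) ^ α * ∑ η ∈ (confs S N).filter (fun η => N - ℓ ≤ η x),
        ∏ z, mstar z ^ η z / aZR α (η z)
      ≤ (N : ℝ) ^ α * (mstar x ^ (N - ℓ) * ∑ η ∈ confs S N, ∏ z, (aZR α (η z))⁻¹) := by
        gcongr
        exact sum_filter_prod_pow_div_aZR_le (fun z => (hm z).1.le) (fun z => (hm z).2) α x N _
    _ = mstar x ^ (N - ℓ) * ((N : ℝ) ^ α * ∑ η ∈ confs S N, ∏ z, (aZR α (η z))⁻¹) := by ring
    _ ≤ _ := by
        rw [mul_comm _ (mstar x ^ _)]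
        exact mul_le_mul_of_nonneg_left (rpow_mul_sum_confs_prod_inv_aZR_le hα N) hmx

theorem exponential_decay_condensate_bound (S : Type*) [Fintype S] [DecidableEq S]
    (hκ : 2 ≤ Fintype.card S) (α : ℝ) (hα : 1 < α)
    (mstar : S → ℝ) (hm : ∀ y, 0 < mstar y ∧ mstar y ≤ 1) (x : S) :
    ∃ C : ℝ, 0 < C ∧ ∀ ℓ N : ℕ, ℓ < N →
      (N : ℝ) ^ α *
        ∑ η ∈ (confs S N).filter (fun η => N - ℓ ≤ η x),
          ∏ z, mstar z ^ η z / aZR α (η z) ≤ C * mstar x ^ (N - ℓ) :=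
  exponential_decay_condensate_bound_general S α hα mstar hm x
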